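/- Suppose smooth fields α⁺, ρ⁺, ρ⁻, u on ℝᵈ × ℝ satisfy, with α⁻ = 1 − α⁺: ∂ₜρ± + u·∇ρ± + (ρc²/(c±)²) div u = 0 and ∂ₜα⁺ + u·∇α⁺ + α⁺α⁻δ div u = 0, where ρc² = ρ⁺ρ⁻(c⁺)²(c⁻)²/(α⁻ρ⁺(c⁺)² + α⁺ρ⁻(c⁻)²) and δ = (ρ⁺(c⁺)² − ρ⁻(c⁻)²)/(α⁻ρ⁺(c⁺)² + α⁺ρ⁻(c⁻)²). Then each phase mass α±ρ± satisfies the conservative equation ∂ₜ(α±ρ±) + div(α±ρ± u) = 0. -/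

import Mathlib

/-- Time partial derivative of a field on `ℝᵈ × ℝ`. -/
noncomputable def pt {d : ℕ} (f : (Fin d → ℝ) × ℝ → ℝ) (x : Fin d → ℝ) (t : ℝ) : ℝ :=
  deriv (fun s => f (x, s)) t

/-- Spatial partial derivative in direction `i` of a field on `ℝᵈ × ℝ`. -/
noncomputable def px {d : ℕ} (i : Fin d) (f : (Fin d → ℝ) × ℝ → ℝ)
    (x : Fin d → ℝ) (t : ℝ) : ℝ :=
  deriv (fun s => f (Function.update x i s, t)) (x i)

private lemma diff_t {d : ℕ} {f : (Fin d → ℝ) × ℝ → ℝ} (hf : ContDiff ℝ (⊤ : ℕ∞) f)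
    (x : Fin d → ℝ) (t : ℝ) : DifferentiableAt ℝ (fun s => f (x, s)) t := by
  have : Differentiable ℝ (fun s : ℝ => f (x, s)) :=
    (hf.differentiable (by simp)).comp ((differentiable_const x).prodMk differentiable_id)
  exact this t

private lemma diff_x {d : ℕ} {f : (Fin d → ℝ) × ℝ → ℝ} (hf : ContDiff ℝ (⊤ : ℕ∞) f)
    (i : Fin d) (x : Fin d → ℝ) (t : ℝ) (s : ℝ) :
    DifferentiableAt ℝ (fun s => f (Function.update x i s, t)) s := by
  have h1 : Differentiable ℝ (fun s : ℝ => Function.update x i s) := by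
    rw [differentiable_pi]
    intro j
    by_cases h : j = i
    · subst h; simp only [Function.update_self]; exact differentiable_id
    · simp only [Function.update_of_ne h]; exact differentiable_const _
  have : Differentiable ℝ (fun s : ℝ => f (Function.update x i s, t)) :=
    (hf.differentiable (by simp)).comp (h1.prodMk (differentiable_const t))
  exact this s

private lemma key {d : ℕ} {f g : (Fin d → ℝ) × ℝ → ℝ}
    {u : (Fin d → ℝ) × ℝ → (Fin d → ℝ)}
    (hf : ContDiff ℝ (⊤ : ℕ∞) f) (hg : ContDiff ℝ (⊤ : ℕ∞) g) (hu : ContDiff ℝ (⊤ : ℕ∞) u)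
    (x : Fin d → ℝ) (t : ℝ) :
    pt (fun z => f z * g z) x t + ∑ i, px i (fun z => f z * g z * u z i) x t
      = g (x, t) * (pt f x t + ∑ i, u (x, t) i * px i f x t)
        + f (x, t) * (pt g x t + ∑ i, u (x, t) i * px i g x t)
        + f (x, t) * g (x, t) * ∑ i, px i (fun z => u z i) x t := by
  have hui : ∀ i, ContDiff ℝ (⊤ : ℕ∞) (fun z => u z i) := fun i => (contDiff_pi.1 hu) i
  have h1 : pt (fun z => f z * g z) x t
      = pt f x t * g (x, t) + f (x, t) * pt g x t := by
    simp only [pt]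
    rw [deriv_fun_mul (diff_t hf x t) (diff_t hg x t)]
  have h2 : ∀ i, px i (fun z => f z * g z * u z i) x t
      = (px i f x t * g (x, t) + f (x, t) * px i g x t) * u (x, t) i
        + f (x, t) * g (x, t) * px i (fun z => u z i) x t := by
    intro i
    simp only [px]
    rw [deriv_fun_mul ((diff_x hf i x t (x i)).fun_mul (diff_x hg i x t (x i)))
        (diff_x (hui i) i x t (x i)),
      deriv_fun_mul (diff_x hf i x t (x i)) (diff_x hg i x t (x i))]
    simp [Function.update_eq_self]
  rw [h1]
  rw [Finset.sum_congr rfl (fun i _ => h2 i)]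
  rw [Finset.sum_add_distrib]
  have h3 : ∑ i, (px i f x t * g (x, t) + f (x, t) * px i g x t) * u (x, t) i
      = g (x, t) * ∑ i, u (x, t) i * px i f x t
        + f (x, t) * ∑ i, u (x, t) i * px i g x t := by
    rw [Finset.mul_sum, Finset.mul_sum, ← Finset.sum_add_distrib]
    exact Finset.sum_congr rfl (fun i _ => by ring)
  rw [h3, ← Finset.mul_sum]
  ring

/-- If the phase densities and the volume fraction satisfy the quasilinear
single-velocity equations with the mixture coefficients `ρc²` and `δ`, then each
phase mass `α±ρ±` satisfies the conservative equation
`∂ₜ(α±ρ±) + div(α±ρ± u) = 0`. -/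
theorem stmt11 (d : ℕ) (αp ρp ρm cp cm : (Fin d → ℝ) × ℝ → ℝ)
    (u : (Fin d → ℝ) × ℝ → (Fin d → ℝ))
    (hαp : ContDiff ℝ (⊤ : ℕ∞) αp) (hρp : ContDiff ℝ (⊤ : ℕ∞) ρp) (hρm : ContDiff ℝ (⊤ : ℕ∞) ρm)
    (hu : ContDiff ℝ (⊤ : ℕ∞) u)
    (hαpos : ∀ z, αp z ∈ Set.Ioo (0 : ℝ) 1)
    (hρppos : ∀ z, 0 < ρp z) (hρmpos : ∀ z, 0 < ρm z)
    (hcppos : ∀ z, 0 < cp z) (hcmpos : ∀ z, 0 < cm z)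
    -- mixture coefficients
    (ρc2 δ : (Fin d → ℝ) × ℝ → ℝ)
    (hρc2 : ∀ z, ρc2 z = ρp z * ρm z * cp z ^ 2 * cm z ^ 2 /
      ((1 - αp z) * ρp z * cp z ^ 2 + αp z * ρm z * cm z ^ 2))
    (hδ : ∀ z, δ z = (ρp z * cp z ^ 2 - ρm z * cm z ^ 2) /
      ((1 - αp z) * ρp z * cp z ^ 2 + αp z * ρm z * cm z ^ 2))
    -- quasilinear equations
    (heqρp : ∀ (x : Fin d → ℝ) (t : ℝ),
      pt ρp x t + (∑ i, u (x, t) i * px i ρp x t)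
        + ρc2 (x, t) / cp (x, t) ^ 2 * ∑ i, px i (fun z => u z i) x t = 0)
    (heqρm : ∀ (x : Fin d → ℝ) (t : ℝ),
      pt ρm x t + (∑ i, u (x, t) i * px i ρm x t)
        + ρc2 (x, t) / cm (x, t) ^ 2 * ∑ i, px i (fun z => u z i) x t = 0)
    (heqα : ∀ (x : Fin d → ℝ) (t : ℝ),
      pt αp x t + (∑ i, u (x, t) i * px i αp x t)
        + αp (x, t) * (1 - αp (x, t)) * δ (x, t)
          * ∑ i, px i (fun z => u z i) x t = 0) :
    (∀ (x : Fin d → ℝ) (t : ℝ),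
      pt (fun z => αp z * ρp z) x t
        + ∑ i, px i (fun z => αp z * ρp z * u z i) x t = 0) ∧
    (∀ (x : Fin d → ℝ) (t : ℝ),
      pt (fun z => (1 - αp z) * ρm z) x t
        + ∑ i, px i (fun z => (1 - αp z) * ρm z * u z i) x t = 0) := by
  have hαm : ContDiff ℝ (⊤ : ℕ∞) (fun z => 1 - αp z) := contDiff_const.sub hαp
  -- relations for 1 - αp derivatives
  have hptm : ∀ x t, pt (fun z => 1 - αp z) x t = - pt αp x t := by
    intro x t; simp only [pt]; exact deriv_const_sub _
  have hpxm : ∀ i x t, px i (fun z => 1 - αp z) x t = - px i αp x t := by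
    intro i x t; simp only [px]; exact deriv_const_sub _
  have hD : ∀ z : (Fin d → ℝ) × ℝ,
      (1 - αp z) * ρp z * cp z ^ 2 + αp z * ρm z * cm z ^ 2 ≠ 0 := by
    intro z
    have h1 := (hαpos z).1
    have h2 := (hαpos z).2
    have h3 : 0 < 1 - αp z := by linarith
    have h4 := mul_pos (mul_pos h3 (hρppos z)) (pow_pos (hcppos z) 2)
    have h5 := mul_pos (mul_pos h1 (hρmpos z)) (pow_pos (hcmpos z) 2)
    nlinarith [h4, h5]
  constructor
  · intro x t
    rw [key hαp hρp hu x t]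
    have e1 := heqα x t
    have e2 := heqρp x t
    have eα : pt αp x t + ∑ i, u (x, t) i * px i αp x t
        = - (αp (x, t) * (1 - αp (x, t)) * δ (x, t)
            * ∑ i, px i (fun z => u z i) x t) := by linarith
    have eρ : pt ρp x t + ∑ i, u (x, t) i * px i ρp x t
        = - (ρc2 (x, t) / cp (x, t) ^ 2 * ∑ i, px i (fun z => u z i) x t) := by linarith
    rw [eα, eρ, hρc2 (x, t), hδ (x, t)]
    have hD' := hD (x, t)
    have hcp := (hcppos (x, t)).ne'
    have hD'' : ρp (x, t) * (1 - αp (x, t)) * cp (x, t) ^ 2 + αp (x, t) * ρm (x, t) * cm (x, t) ^ 2 ≠ 0 := by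
      intro h; apply hD'; linarith
    field_simp
    ring
  · intro x t
    rw [key hαm hρm hu x t]
    simp only [hptm, hpxm]
    have e1 := heqα x t
    have e2 := heqρm x t
    have eα : - pt αp x t + ∑ i, u (x, t) i * -px i αp x t
        = αp (x, t) * (1 - αp (x, t)) * δ (x, t)
            * ∑ i, px i (fun z => u z i) x t := by
      have : ∑ i, u (x, t) i * -px i αp x t = - ∑ i, u (x, t) i * px i αp x t := by
        rw [← Finset.sum_neg_distrib]; apply Finset.sum_congr rfl; intro i _; ring
      rw [this]; linarith
    have eρ : pt ρm x t + ∑ i, u (x, t) i * px i ρm x t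
        = - (ρc2 (x, t) / cm (x, t) ^ 2 * ∑ i, px i (fun z => u z i) x t) := by linarith
    rw [eα, eρ, hρc2 (x, t), hδ (x, t)]
    have hD' := hD (x, t)
    have hcm := (hcmpos (x, t)).ne'
    have hD'' : (1 - αp (x, t)) * ρp (x, t) * cp (x, t) ^ 2 + ρm (x, t) * αp (x, t) * cm (x, t) ^ 2 ≠ 0 := by
      intro h; apply hD'; linarith
    field_simp
    ring
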